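/- arXiv:1904.12920 — 3 statements merged into one kernel-verified Lean document; each statement's English description precedes it below -/
import Mathlib

section
/- Let α, β, γ be positive integers with gcd(α, β) = 1 and α dividing γ. Write γ = γ₁γ₂ where every prime dividing γ₁ divides α and gcd(γ₂, α) = 1. Then for every y in [1, γ/α], gcd(αy + β, γ) divides γ₂, and conversely for every divisor d of γ₂ there exists y in [1, γ/α] with gcd(αy + β, γ) = d. -/
/-!
Since `αy + β` is coprime to `α`, it is coprime to `γ₁` (all of whose primes divide `α`), so
`gcd(αy + β, γ) = gcd(αy + β, γ₂)`, a divisor of `γ₂`. Conversely, `α` is invertible modulo `γ₂`,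
so for `d ∣ γ₂` some `y ∈ [1, γ₂]` solves `αy + β ≡ d (mod γ₂)`, giving `gcd(αy + β, γ₂) = d`;
and `γ₂ ≤ γ/α` because `α` and `γ₂` are coprime divisors of `γ`.
-/

theorem Nat.Coprime.coprime_of_forall_prime_dvd {n a b : ℕ} (hn : n.Coprime a)
    (hb : ∀ p : ℕ, p.Prime → p ∣ b → p ∣ a) : n.Coprime b :=
  Nat.coprime_of_dvd fun p hp hpn hpb => hp.not_dvd_one (hn ▸ Nat.dvd_gcd hpn (hb p hp hpb))

theorem ZMod.exists_mem_Icc_natCast_eq {m : ℕ} [NeZero m] (x : ZMod m) :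
    ∃ y ∈ Set.Icc 1 m, (y : ZMod m) = x :=
  ⟨(x - 1).val + 1, ⟨Nat.le_add_left 1 _, (x - 1).val_lt⟩, by simp⟩

theorem Nat.exists_mem_Icc_mul_add_modEq {a m : ℕ} [NeZero m] (ha : a.Coprime m) (b c : ℕ) :
    ∃ y ∈ Set.Icc 1 m, a * y + b ≡ c [MOD m] := by
  obtain ⟨y, hy, hyx⟩ :=
    ZMod.exists_mem_Icc_natCast_eq ((a : ZMod m)⁻¹ * ((c : ZMod m) - (b : ZMod m)))
  refine ⟨y, hy, (ZMod.natCast_eq_natCast_iff _ _ _).mp ?_⟩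
  push_cast
  rw [hyx, ← mul_assoc, ZMod.coe_mul_inv_eq_one a ha]
  ring

theorem gcd_affine_values_general (α β γ γ₁ γ₂ : ℕ) (hα : 0 < α) (hγ : 0 < γ)
    (hcop : Nat.Coprime α β) (hdvd : α ∣ γ) (hsplit : γ = γ₁ * γ₂)
    (hrad : ∀ p : ℕ, p.Prime → p ∣ γ₁ → p ∣ α) (hcop2 : Nat.Coprime γ₂ α) :
    (∀ y ∈ Set.Icc 1 (γ / α), Nat.gcd (α * y + β) γ ∣ γ₂) ∧
    (∀ d : ℕ, d ∣ γ₂ → ∃ y ∈ Set.Icc 1 (γ / α), Nat.gcd (α * y + β) γ = d) := by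
  have hgcd (y : ℕ) : Nat.gcd (α * y + β) γ = Nat.gcd (α * y + β) γ₂ := by
    have hy : (α * y + β).Coprime α := (Nat.coprime_mul_left_add_left β α y).mpr hcop.symm
    rw [hsplit]
    exact (hy.coprime_of_forall_prime_dvd hrad).symm.gcd_mul_left_cancel_right γ₂
  refine ⟨fun y _ => hgcd y ▸ Nat.gcd_dvd_right _ _, fun d hd => ?_⟩
  have : NeZero γ₂ := ⟨by rintro rfl; simp [hsplit] at hγ⟩
  have hγ₂_le : γ₂ ≤ γ / α :=
    (Nat.le_div_iff_mul_le hα).mpr <| Nat.le_of_dvd hγ <|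
      hcop2.mul_dvd_of_dvd_of_dvd (hsplit ▸ Nat.dvd_mul_left γ₂ γ₁) hdvd
  obtain ⟨y, ⟨hy₁, hy₂⟩, hmod⟩ := Nat.exists_mem_Icc_mul_add_modEq hcop2.symm β d
  exact ⟨y, ⟨hy₁, hy₂.trans hγ₂_le⟩, by rw [hgcd, hmod.gcd_eq, Nat.gcd_eq_left hd]⟩

/-- For `gcd(α,β)=1`, `α ∣ γ`, `γ = γ₁γ₂` with `rad(γ₁) ∣ α`, `gcd(γ₂,α)=1`:
`gcd(αy+β, γ)` always divides `γ₂`, and every divisor of `γ₂` is attained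
for some `y ∈ [1, γ/α]`. -/
theorem gcd_affine_values (α β γ γ₁ γ₂ : ℕ) (hα : 0 < α) (hβ : 0 < β) (hγ : 0 < γ)
    (hcop : Nat.Coprime α β) (hdvd : α ∣ γ) (hsplit : γ = γ₁ * γ₂)
    (hrad : ∀ p : ℕ, p.Prime → p ∣ γ₁ → p ∣ α) (hcop2 : Nat.Coprime γ₂ α) :
    (∀ y ∈ Set.Icc 1 (γ / α), Nat.gcd (α * y + β) γ ∣ γ₂) ∧
    (∀ d : ℕ, d ∣ γ₂ → ∃ y ∈ Set.Icc 1 (γ / α), Nat.gcd (α * y + β) γ = d) :=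
  gcd_affine_values_general α β γ γ₁ γ₂ hα hγ hcop hdvd hsplit hrad hcop2
end

section
/- Let m > 1 divide n, let π be an (n,m)-piecewise affine permutation of [1,n]. Then every cycle of π has length divisible by m, and every cycle of π contains an element divisible by m. Moreover, if a cycle of π has length mt, then for each i in [1,m] that cycle contains exactly t elements congruent to i modulo m. -/
/-- `psi k x` is the representative of `x` mod `k` in `[1, k]`. -/
def psi (k x : ℕ) : ℕ := if x % k = 0 then k else x % k

/-- `π` is an `(n,m)`-piecewise affine permutation of `[1,n]` with parameters
`(a, b, c)`: it permutes `[1,n]` (and is the identity elsewhere), the entries of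
`a, b` lie in `[1,n]`, the entries of `c` form a permutation of `[1,m]`, and for
`x ∈ [1,n]` with `Ψ_m(x) = c_i` one has `π(x) = Ψ_n(a_i x + b_i)` and
`Ψ_m(π(x)) = c_{i+1}`, indices cyclic modulo `m`. -/
def IsPAP (n m : ℕ) [NeZero m] (a b c : Fin m → ℕ) (π : ℕ → ℕ) : Prop :=
  Set.BijOn π (Set.Icc 1 n) (Set.Icc 1 n) ∧
  (∀ x : ℕ, x ∉ Set.Icc 1 n → π x = x) ∧
  (∀ i, a i ∈ Set.Icc 1 n) ∧ (∀ i, b i ∈ Set.Icc 1 n) ∧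
  (∀ i, c i ∈ Set.Icc 1 m) ∧ Function.Injective c ∧
  ∀ x ∈ Set.Icc 1 n, ∀ i, psi m x = c i →
    π x = psi n (a i * x + b i) ∧ psi m (π x) = c (i + 1)

/-!
Along an orbit the residue class advances one step along the cyclic order `c`: if
`Ψ_m(x) = c_{i₀}` then `Ψ_m(π^k x) = c_{i₀ + k}`, indices in `ℤ/m`. As `c` is injective,
`π^k x` lies in the class `c_j` exactly when `k ≡ j - i₀ (mod m)`. Taking `k` the period gives
`m ∣ period`; taking `c_j = m` gives a multiple of `m` on the orbit; and a period `mt` contains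
exactly `t` integers of each class mod `m`.
-/

open Function Fin.NatCast Fin.CommRing

lemma psi_mem_Icc (m x : ℕ) [NeZero m] : psi m x ∈ Set.Icc 1 m := by
  have := Nat.mod_lt x (NeZero.pos m)
  unfold psi
  split_ifs <;> simp only [Set.mem_Icc] <;> omega

lemma dvd_of_psi_eq_self {m y : ℕ} (h : psi m y = m) : m ∣ y := by
  unfold psi at h
  split_ifs at h with h0
  · exact Nat.dvd_of_mod_eq_zero h0
  · rcases m.eq_zero_or_pos with rfl | hm
    · simp_all
    · exact absurd h (Nat.mod_lt y hm).ne

lemma exists_eq_of_injective_of_forall_mem_Icc {m : ℕ} {c : Fin m → ℕ}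
    (hc : ∀ i, c i ∈ Set.Icc 1 m) (hinj : Injective c) {v : ℕ} (hv : v ∈ Set.Icc 1 m) :
    ∃ j, c j = v := by
  have hbij := (Fintype.bijective_iff_injective_and_card (Set.codRestrict c _ hc)).2
    ⟨(Set.injective_codRestrict hc).2 hinj, by simp⟩
  obtain ⟨j, hj⟩ := hbij.2 ⟨v, hv⟩
  exact ⟨j, congrArg Subtype.val hj⟩

lemma card_filter_range_natCast_eq {m T : ℕ} [NeZero m] (hT : m ∣ T) (r : Fin m) :
    ((Finset.range T).filter (fun k : ℕ => (k : Fin m) = r)).card = T / m := by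
  have hcount := Nat.count_modEq_card T (NeZero.pos m) r
  rw [Nat.mod_eq_zero_of_dvd hT, if_neg (Nat.not_lt_zero _), add_zero,
    Nat.count_eq_card_filter_range] at hcount
  rw [← hcount]
  congr 1
  refine Finset.filter_congr fun k _ => ?_
  rw [Fin.ext_iff, Fin.val_natCast, Nat.ModEq, Nat.mod_eq_of_lt r.is_lt]

namespace IsPAP

variable {n m : ℕ} [NeZero m] {a b c : Fin m → ℕ} {π : ℕ → ℕ}

lemma psi_iterate (hpap : IsPAP n m a b c π) {x : ℕ} (hx : x ∈ Set.Icc 1 n) {i₀ : Fin m}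
    (hi₀ : psi m x = c i₀) (k : ℕ) : psi m (π^[k] x) = c (i₀ + k) := by
  obtain ⟨hbij, -, -, -, -, -, hstep⟩ := hpap
  induction k with
  | zero => simpa using hi₀
  | succ k ih =>
    rw [iterate_succ_apply', (hstep _ (hbij.mapsTo.iterate k hx) _ ih).2, Nat.cast_succ,
      add_assoc]

lemma exists_c_eq (hpap : IsPAP n m a b c π) {v : ℕ} (hv : v ∈ Set.Icc 1 m) : ∃ j, c j = v :=
  exists_eq_of_injective_of_forall_mem_Icc hpap.2.2.2.2.1 hpap.2.2.2.2.2.1 hv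

lemma psi_iterate_eq_iff (hpap : IsPAP n m a b c π) {x : ℕ} (hx : x ∈ Set.Icc 1 n)
    {i₀ : Fin m} (hi₀ : psi m x = c i₀) (k : ℕ) (j : Fin m) :
    psi m (π^[k] x) = c j ↔ (k : Fin m) = j - i₀ := by
  rw [hpap.psi_iterate hx hi₀, hpap.2.2.2.2.2.1.eq_iff, eq_sub_iff_add_eq']

end IsPAP

theorem pap_cycle_basic_general (n m : ℕ) [NeZero m]
    (a b c : Fin m → ℕ) (π : ℕ → ℕ) (hpap : IsPAP n m a b c π) :
    ∀ x ∈ Set.Icc 1 n,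
      m ∣ Function.minimalPeriod π x ∧
      (∃ k : ℕ, m ∣ π^[k] x) ∧
      (∀ i ∈ Set.Icc 1 m,
        ((Finset.range (Function.minimalPeriod π x)).filter
            (fun k => psi m (π^[k] x) = i)).card
          = Function.minimalPeriod π x / m) := by
  intro x hx
  obtain ⟨i₀, hi₀⟩ := hpap.exists_c_eq (psi_mem_Icc m x)
  have horbit := hpap.psi_iterate_eq_iff hx hi₀.symm
  have hT : m ∣ minimalPeriod π x := by
    have := (horbit _ i₀).1 (by rw [iterate_minimalPeriod, hi₀])
    rwa [sub_self, Fin.natCast_eq_zero] at this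
  refine ⟨hT, ?_, fun i hi => ?_⟩
  · obtain ⟨j, hj⟩ := hpap.exists_c_eq (Set.right_mem_Icc.2 NeZero.one_le)
    exact ⟨(j - i₀).val, dvd_of_psi_eq_self <|
      ((horbit _ j).2 (Fin.cast_val_eq_self _)).trans hj⟩
  · obtain ⟨j, rfl⟩ := hpap.exists_c_eq hi
    simp_rw [horbit]
    exact card_filter_range_natCast_eq hT _

/-- Basic properties of the cycle decomposition of an `(n,m)`-p.a.p.:
every cycle has length divisible by `m`, contains a multiple of `m`, and a
cycle of length `mt` contains exactly `t` elements in each residue class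
`i ∈ [1,m]` modulo `m`. -/
theorem pap_cycle_basic (n m : ℕ) [NeZero m] (hm : 1 < m) (hmn : m ∣ n)
    (a b c : Fin m → ℕ) (π : ℕ → ℕ) (hpap : IsPAP n m a b c π) :
    ∀ x ∈ Set.Icc 1 n,
      m ∣ Function.minimalPeriod π x ∧
      (∃ k : ℕ, m ∣ π^[k] x) ∧
      (∀ i ∈ Set.Icc 1 m,
        ((Finset.range (Function.minimalPeriod π x)).filter
            (fun k => psi m (π^[k] x) = i)).card
          = Function.minimalPeriod π x / m) :=
  pap_cycle_basic_general n m a b c π hpap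
end

section
/- Let m > 1 divide n and write n = n₁n₂ where every prime dividing n₁ divides n/m and gcd(n₂, n/m) = 1. Then the number of distinct permutations of [1,n] arising as (n,m)-piecewise affine permutations equals (m-1)! · (n·n₂·φ(n₁)/m²)^m, where φ is Euler's totient function. -/
open Function Set

/-!
The residue classes modulo `m` of `[1, m k]` are the sets `{r + t m : t < k}`, `r ∈ [1, m]`.
A piecewise affine permutation carries the classes around one `m`-cycle `c₀ → c₁ → ⋯`, and on
the class of `cᵢ` it acts on the index `t` as `t ↦ vᵢ + aᵢ t (mod k)`; injectivity forces `aᵢ`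
to be a unit mod `k`. Conversely each such datum, with the cycle rotated to start at class `1`,
gives a distinct permutation, so there are `(m-1)! (φ(k) k)^m` of them. For `k = n/m` the
conditions on `n₁, n₂` give `n₁ = k d`, `m = d n₂` and `φ(n₁) = d φ(k)`, which turns this count
into the stated formula.
-/

section Psi

variable {k x y : ℕ}

theorem psi_mem (hk : 0 < k) (x : ℕ) : psi k x ∈ Icc 1 k := by
  unfold psi
  split_ifs with h
  · exact ⟨hk, le_rfl⟩
  · exact ⟨Nat.one_le_iff_ne_zero.2 h, (Nat.mod_lt x hk).le⟩

theorem psi_modEq (k x : ℕ) : psi k x ≡ x [MOD k] := by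
  unfold psi
  split_ifs with h
  · simp [Nat.ModEq, h]
  · exact Nat.mod_modEq x k

theorem psi_eq_psi_iff : psi k x = psi k y ↔ x ≡ y [MOD k] := by
  refine ⟨fun h => (psi_modEq k x).symm.trans (h ▸ psi_modEq k y), fun h => ?_⟩
  unfold psi
  rw [show x % k = y % k from h]

theorem psi_eq_self (hx : x ∈ Icc 1 k) : psi k x = x := by
  obtain ⟨h1, h2⟩ := hx
  unfold psi
  rcases h2.lt_or_eq with h | rfl
  · rw [Nat.mod_eq_of_lt h, if_neg (by omega)]
  · simp

theorem eq_of_modEq_of_mem (hx : x ∈ Icc 1 k) (hy : y ∈ Icc 1 k) (h : x ≡ y [MOD k]) :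
    x = y := by
  rw [← psi_eq_self hx, ← psi_eq_self hy, psi_eq_psi_iff.2 h]

theorem psi_psi_of_dvd {m : ℕ} (h : m ∣ k) : psi m (psi k x) = psi m x :=
  psi_eq_psi_iff.2 ((psi_modEq k x).of_dvd h)

end Psi

section ResidueClasses

variable {m k r t x : ℕ}

theorem add_mul_mem_Icc (hr : r ∈ Icc 1 m) (ht : t < k) : r + t * m ∈ Icc 1 (m * k) := by
  obtain ⟨h1, h2⟩ := hr
  have : (t + 1) * m ≤ k * m := Nat.mul_le_mul_right m ht
  constructor <;> nlinarith

theorem psi_add_mul (hr : r ∈ Icc 1 m) : psi m (r + t * m) = r := by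
  rw [← psi_eq_self hr, psi_eq_psi_iff, psi_eq_self hr]
  exact Nat.add_mul_mod_self_right r t m

theorem exists_eq_psi_add_mul (hm : 0 < m) (hx : x ∈ Icc 1 (m * k)) :
    ∃ t < k, x = psi m x + t * m := by
  obtain ⟨hx1, hx2⟩ := hx
  have hdiv := Nat.div_add_mod x m
  have hlt := Nat.mod_lt x hm
  have hq : x / m ≤ k := Nat.div_le_of_le_mul hx2
  generalize x / m = q at hdiv hq
  unfold psi
  split_ifs with h
  · obtain ⟨q, rfl⟩ := Nat.exists_eq_add_one_of_ne_zero (n := q) (by rintro rfl; omega)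
    exact ⟨q, by omega, by linarith⟩
  · exact ⟨q, Nat.lt_of_mul_lt_mul_left (a := m) (by omega), by linarith⟩

theorem exists_apply_eq_of_injective {c : Fin m → ℕ} (hc : ∀ i, c i ∈ Icc 1 m)
    (hinj : Injective c) (hr : r ∈ Icc 1 m) : ∃ i, c i = r := by
  have hrange : range c = Icc 1 m :=
    eq_of_subset_of_ncard_le (range_subset_iff.2 hc)
      (by simp [ncard_range_of_injective hinj]) (finite_Icc 1 m)
  exact (hrange.symm ▸ hr : r ∈ range c)

theorem exists_eq_label_add_mul {c : Fin m → ℕ} (hc : ∀ i, c i ∈ Icc 1 m)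
    (hinj : Injective c) (hx : x ∈ Icc 1 (m * k)) : ∃ i, ∃ t < k, x = c i + t * m := by
  have hm : 0 < m := Nat.pos_of_ne_zero fun h => by simp [h] at hx
  obtain ⟨t, ht, hxt⟩ := exists_eq_psi_add_mul hm hx
  obtain ⟨i, hi⟩ := exists_apply_eq_of_injective hc hinj (psi_mem hm x)
  exact ⟨i, t, ht, hi ▸ hxt⟩

theorem mul_modEq_mul_iff {a b : ℕ} (hm : m ≠ 0) :
    a * m ≡ b * m [MOD m * k] ↔ a ≡ b [MOD k] := by
  rw [mul_comm m k]
  exact Nat.ModEq.mul_right_cancel_iff' hm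

end ResidueClasses

namespace IsPAP

variable {n m k t : ℕ} [NeZero m] {a b c : Fin m → ℕ} {π : ℕ → ℕ}

theorem rotate (hP : IsPAP n m a b c π) (j : Fin m) :
    IsPAP n m (fun i => a (i + j)) (fun i => b (i + j)) (fun i => c (i + j)) π := by
  obtain ⟨hbij, hid, ha, hb, hc, hinj, hπ⟩ := hP
  refine ⟨hbij, hid, fun i => ha _, fun i => hb _, fun i => hc _,
    fun i i' h => add_right_cancel (hinj h), fun x hx i hxi => ?_⟩
  beta_reduce
  rw [add_right_comm]
  exact hπ x hx _ hxi

theorem pos (hP : IsPAP n m a b c π) : 0 < n :=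
  Nat.lt_of_lt_of_le (hP.2.2.1 0).1 (hP.2.2.1 0).2

theorem label_mem_Icc (hP : IsPAP (m * k) m a b c π) (i : Fin m) : c i ∈ Icc 1 (m * k) := by
  simpa using add_mul_mem_Icc (t := 0) (hP.2.2.2.2.1 i) (Nat.pos_of_mul_pos_left hP.pos)

theorem exists_label_eq (hP : IsPAP n m a b c π) {r : ℕ} (hr : r ∈ Icc 1 m) : ∃ i, c i = r :=
  exists_apply_eq_of_injective hP.2.2.2.2.1 hP.2.2.2.2.2.1 hr

theorem apply_add_mul (hP : IsPAP (m * k) m a b c π) (i : Fin m) (ht : t < k) :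
    π (c i + t * m) = psi (m * k) (a i * (c i + t * m) + b i) ∧
      psi m (π (c i + t * m)) = c (i + 1) :=
  hP.2.2.2.2.2.2 _ (add_mul_mem_Icc (hP.2.2.2.2.1 i) ht) i (psi_add_mul (hP.2.2.2.2.1 i))

theorem apply_add_mul_modEq (hP : IsPAP (m * k) m a b c π) (i : Fin m) (ht : t < k) :
    π (c i + t * m) ≡ π (c i) + a i * t * m [MOD m * k] := by
  have h0 := (hP.apply_add_mul i (t := 0) (by omega)).1
  rw [zero_mul, add_zero] at h0
  rw [(hP.apply_add_mul i ht).1, h0]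
  calc psi (m * k) (a i * (c i + t * m) + b i)
      ≡ a i * (c i + t * m) + b i [MOD m * k] := psi_modEq _ _
    _ = (a i * c i + b i) + a i * t * m := by ring
    _ ≡ psi (m * k) (a i * c i + b i) + a i * t * m [MOD m * k] :=
        (psi_modEq _ _).symm.add_right _

theorem exists_apply_label_eq (hP : IsPAP (m * k) m a b c π) (i : Fin m) (hk : 0 < k) :
    ∃ t < k, π (c i) = c (i + 1) + t * m := by
  have h := hP.apply_add_mul i hk
  rw [zero_mul, add_zero] at h
  rw [← h.2]
  exact exists_eq_psi_add_mul (NeZero.pos m) (hP.1.mapsTo (hP.label_mem_Icc i))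

/-- A common prime factor `p` of `a i` and `k` would make `π` identify `c i` and
`c i + (k / p) m`. -/
theorem coprime (hP : IsPAP (m * k) m a b c π) (i : Fin m) : (a i).Coprime k := by
  by_contra hcop
  obtain ⟨p, hp, ⟨a', ha'⟩, hpk⟩ := Nat.Prime.not_coprime_iff_dvd.1 hcop
  have hk : 0 < k := Nat.pos_of_mul_pos_left hP.pos
  have hs : 0 < k / p := Nat.div_pos (Nat.le_of_dvd hk hpk) hp.pos
  have hsk : k / p < k := Nat.div_lt_self hk hp.one_lt
  have hdvd : m * k ∣ a i * (k / p) * m := ⟨a', calc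
    a i * (k / p) * m = a' * (p * (k / p)) * m := by rw [ha']; ring
    _ = m * k * a' := by rw [Nat.mul_div_cancel' hpk]; ring⟩
  have hmod : π (c i + k / p * m) ≡ π (c i) [MOD m * k] := by
    simpa using (hP.apply_add_mul_modEq i hsk).trans
      (Nat.ModEq.add_left _ (Nat.modEq_zero_iff_dvd.2 hdvd))
  have heq := hP.1.injOn (add_mul_mem_Icc (hP.2.2.2.2.1 i) hsk) (hP.label_mem_Icc i)
    (eq_of_modEq_of_mem (hP.1.mapsTo (add_mul_mem_Icc (hP.2.2.2.2.1 i) hsk))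
      (hP.1.mapsTo (hP.label_mem_Icc i)) hmod)
  have : 0 < k / p * m := Nat.mul_pos hs (NeZero.pos m)
  omega

end IsPAP

/-- On the class of `c i` this is `c i + t m ↦ c (i + 1) + ((v i + a i t) mod k) m`. -/
noncomputable def normalPAP (n m : ℕ) [NeZero m] (c a v : Fin m → ℕ) (x : ℕ) : ℕ :=
  if x ∈ Icc 1 n then
    let i := invFun c (psi m x)
    psi n (c (i + 1) + v i * m + a i * (x - c i))
  else x

section NormalPAP

variable {m k t : ℕ} [NeZero m] {c a v : Fin m → ℕ}

theorem normalPAP_of_notMem {n x : ℕ} (hx : x ∉ Icc 1 n) : normalPAP n m c a v x = x :=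
  if_neg hx

theorem normalPAP_mapsTo :
    MapsTo (normalPAP (m * k) m c a v) (Icc 1 (m * k)) (Icc 1 (m * k)) := fun x hx => by
    rw [normalPAP, if_pos hx]
    exact psi_mem (hx.1.trans hx.2) _

variable (hc : ∀ i, c i ∈ Icc 1 m) (hinj : Injective c)
include hc hinj

theorem normalPAP_add_mul (i : Fin m) (ht : t < k) :
    normalPAP (m * k) m c a v (c i + t * m) =
      psi (m * k) (c (i + 1) + v i * m + a i * (t * m)) := by
  rw [normalPAP, if_pos (add_mul_mem_Icc (hc i) ht), psi_add_mul (hc i),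
    leftInverse_invFun hinj i]
  dsimp only
  rw [Nat.add_sub_cancel_left]

theorem psi_normalPAP_add_mul (i : Fin m) (ht : t < k) :
    psi m (normalPAP (m * k) m c a v (c i + t * m)) = c (i + 1) := by
  rw [normalPAP_add_mul hc hinj i ht, psi_psi_of_dvd (dvd_mul_right m k),
    ← psi_eq_self (hc (i + 1)), psi_eq_psi_iff, psi_eq_self (hc (i + 1)), ← mul_assoc]
  calc c (i + 1) + v i * m + a i * t * m = c (i + 1) + (v i + a i * t) * m := by ring
    _ ≡ c (i + 1) [MOD m] := Nat.add_mul_mod_self_right _ _ _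

theorem normalPAP_label (i : Fin m) (hv : v i < k) :
    normalPAP (m * k) m c a v (c i) = c (i + 1) + v i * m := by
  simpa [psi_eq_self (add_mul_mem_Icc (hc (i + 1)) hv)] using
    normalPAP_add_mul (a := a) (v := v) hc hinj i (t := 0) (hv.trans_le' (Nat.zero_le _))

theorem normalPAP_injOn (ha : ∀ i, (a i).Coprime k) :
    InjOn (normalPAP (m * k) m c a v) (Icc 1 (m * k)) := by
  intro x hx y hy hxy
  obtain ⟨i, s, hs, rfl⟩ := exists_eq_label_add_mul hc hinj hx
  obtain ⟨j, t, ht, rfl⟩ := exists_eq_label_add_mul hc hinj hy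
  obtain rfl : i = j := add_right_cancel <| hinj <| by
    rw [← psi_normalPAP_add_mul hc hinj i hs,
      ← psi_normalPAP_add_mul (a := a) (v := v) hc hinj j ht, hxy]
  rw [normalPAP_add_mul hc hinj i hs, normalPAP_add_mul hc hinj i ht, psi_eq_psi_iff,
    ← mul_assoc, ← mul_assoc] at hxy
  have hst : a i * s ≡ a i * t [MOD k] :=
    (mul_modEq_mul_iff (NeZero.ne m)).1 (Nat.ModEq.add_left_cancel' _ hxy)
  rw [(Nat.ModEq.cancel_left_of_coprime (ha i).symm hst).eq_of_lt_of_lt hs ht]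

theorem isPAP_normalPAP (ha : ∀ i, a i ∈ Icc 1 k) (hcop : ∀ i, (a i).Coprime k) :
    IsPAP (m * k) m a (fun i => psi (m * k) (c (i + 1) + v i * m + a i * (m * k - c i))) c
      (normalPAP (m * k) m c a v) := by
  have hk : 0 < k := Nat.lt_of_lt_of_le (ha 0).1 (ha 0).2
  have hn : 0 < m * k := Nat.mul_pos (NeZero.pos m) hk
  refine ⟨(finite_Icc _ _).injOn_iff_bijOn_of_mapsTo normalPAP_mapsTo |>.1
      (normalPAP_injOn hc hinj hcop), fun x hx => normalPAP_of_notMem hx,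
    fun i => ⟨(ha i).1, (ha i).2.trans (Nat.le_mul_of_pos_left k (NeZero.pos m))⟩,
    fun i => psi_mem hn _, hc, hinj, fun x hx i hxi => ?_⟩
  obtain ⟨t, ht, rfl⟩ : ∃ t < k, x = c i + t * m :=
    hxi ▸ exists_eq_psi_add_mul (NeZero.pos m) hx
  refine ⟨?_, psi_normalPAP_add_mul hc hinj i ht⟩
  have hci : c i ≤ m * k := (hc i).2.trans (Nat.le_mul_of_pos_right m hk)
  rw [normalPAP_add_mul hc hinj i ht, psi_eq_psi_iff]
  calc c (i + 1) + v i * m + a i * (t * m)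
      ≡ c (i + 1) + v i * m + a i * (t * m) + a i * (m * k) [MOD m * k] :=
        (Nat.add_mul_mod_self_right _ _ _).symm
    _ = a i * (c i + t * m) + (c (i + 1) + v i * m + a i * (m * k - c i)) := by
        obtain ⟨d, hd⟩ := Nat.exists_eq_add_of_le hci
        rw [hd, Nat.add_sub_cancel_left]
        ring
    _ ≡ a i * (c i + t * m) + psi (m * k) (c (i + 1) + v i * m + a i * (m * k - c i))
        [MOD m * k] := (psi_modEq _ _).symm.add_left _

end NormalPAP

open Fin.NatCast in
theorem label_eq_of_normalPAP_eq {m k : ℕ} [NeZero m] {c a v c' a' v' : Fin m → ℕ}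
    (hk : 0 < k) (hc : ∀ i, c i ∈ Icc 1 m) (hinj : Injective c) (hc0 : c 0 = 1)
    (hc' : ∀ i, c' i ∈ Icc 1 m) (hinj' : Injective c') (hc0' : c' 0 = 1)
    (h : normalPAP (m * k) m c a v = normalPAP (m * k) m c' a' v') : c = c' := by
  have key : ∀ j : ℕ, c j = c' j := by
    intro j
    induction j with
    | zero => rw [Nat.cast_zero, hc0, hc0']
    | succ j ih =>
      have h₁ := psi_normalPAP_add_mul (a := a) (v := v) hc hinj (j : Fin m) hk
      have h₂ := psi_normalPAP_add_mul (a := a') (v := v') hc' hinj' (j : Fin m) hk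
      rw [zero_mul, add_zero] at h₁ h₂
      rw [Nat.cast_succ, ← h₁, ← h₂, h, ih]
  exact funext fun i => by simpa using key i

theorem slope_offset_eq_of_normalPAP_eq {m k : ℕ} [NeZero m] {c a v a' v' : Fin m → ℕ}
    (hc : ∀ i, c i ∈ Icc 1 m) (hinj : Injective c) (ha : ∀ i, a i ∈ Icc 1 k)
    (ha' : ∀ i, a' i ∈ Icc 1 k) (hv : ∀ i, v i < k) (hv' : ∀ i, v' i < k)
    (h : normalPAP (m * k) m c a v = normalPAP (m * k) m c a' v') : a = a' ∧ v = v' := by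
  have hvv : v = v' := funext fun i => by
    have h₁ := normalPAP_label (a := a) hc hinj i (hv i)
    rw [h, normalPAP_label hc hinj i (hv' i)] at h₁
    exact Nat.eq_of_mul_eq_mul_right (NeZero.pos m) (by omega)
  subst hvv
  refine ⟨funext fun i => ?_, rfl⟩
  rcases Nat.lt_or_ge 1 k with hk | hk
  · have h₁ := normalPAP_add_mul (a := a) (v := v) hc hinj i hk
    rw [h, normalPAP_add_mul hc hinj i hk, psi_eq_psi_iff, one_mul] at h₁
    exact eq_of_modEq_of_mem (ha i) (ha' i)
      ((mul_modEq_mul_iff (NeZero.ne m)).1 (Nat.ModEq.add_left_cancel' _ h₁.symm))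
  · obtain ⟨h₁, h₂⟩ := ha i
    obtain ⟨h₁', h₂'⟩ := ha' i
    omega

theorem IsPAP.eq_normalPAP {m k : ℕ} [NeZero m] {a b c v : Fin m → ℕ} {π : ℕ → ℕ}
    (hP : IsPAP (m * k) m a b c π) (hv : ∀ i, π (c i) = c (i + 1) + v i * m) :
    π = normalPAP (m * k) m c (fun i => psi k (a i)) v := by
  obtain ⟨hbij, hid, -, -, hc, hinj, -⟩ := id hP
  funext x
  by_cases hx : x ∈ Icc 1 (m * k)
  · obtain ⟨i, t, ht, rfl⟩ := exists_eq_label_add_mul hc hinj hx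
    refine eq_of_modEq_of_mem (hbij.mapsTo hx) (normalPAP_mapsTo hx) ?_
    rw [normalPAP_add_mul hc hinj i ht]
    have hat : psi k (a i) * t * m ≡ a i * t * m [MOD m * k] :=
      (mul_modEq_mul_iff (NeZero.ne m)).2 ((psi_modEq k (a i)).mul_right t)
    calc π (c i + t * m) ≡ π (c i) + a i * t * m [MOD m * k] := hP.apply_add_mul_modEq i ht
      _ ≡ c (i + 1) + v i * m + psi k (a i) * t * m [MOD m * k] := by
          rw [hv i]; exact hat.symm.add_left _
      _ = c (i + 1) + v i * m + psi k (a i) * (t * m) := by ring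
      _ ≡ _ [MOD m * k] := (psi_modEq _ _).symm
  · rw [hid x hx, normalPAP_of_notMem hx]

/-- The orders in which the residue classes `[1,m]` modulo `m` can be visited, starting from
class `1`. -/
def CycleOrder (m : ℕ) [NeZero m] : Type :=
  {c : Fin m → ℕ // (∀ i, c i ∈ Icc 1 m) ∧ Injective c ∧ c 0 = 1}

namespace CycleOrder

variable {m : ℕ} [NeZero m]

def equivEmbedding : CycleOrder m ≃ ({i : Fin m // i ≠ 0} ↪ {r : ℕ // r ∈ Icc 2 m}) where
  toFun c := ⟨fun i => ⟨c.1 i, by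
      obtain ⟨hc, hinj, hc0⟩ := c.2
      have : c.1 i ≠ 1 := fun h => i.2 (hinj (h.trans hc0.symm))
      exact ⟨by have := (hc i).1; omega, (hc i).2⟩⟩,
    fun i i' h => Subtype.ext (c.2.2.1 (congrArg Subtype.val h))⟩
  invFun g := ⟨fun i => if h : i = 0 then 1 else g ⟨i, h⟩,
    fun i => by
      dsimp only
      split_ifs with h
      · exact ⟨le_rfl, NeZero.one_le⟩
      · exact ⟨(g ⟨i, h⟩).2.1.trans' (by norm_num), (g ⟨i, h⟩).2.2⟩,
    fun i i' h => by
      dsimp only at h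
      split_ifs at h with hi hi'
      · exact hi.trans hi'.symm
      · exact absurd h.symm (by have := (g ⟨i', hi'⟩).2.1; omega)
      · exact absurd h (by have := (g ⟨i, hi⟩).2.1; omega)
      · exact congrArg Subtype.val (g.injective (Subtype.ext h)),
    dif_pos rfl⟩
  left_inv c := Subtype.ext <| funext fun i => by
    dsimp only
    split_ifs with h
    · rw [h, c.2.2.2]
    · rfl
  right_inv g := by ext i; simp [i.2]

theorem card : Nat.card (CycleOrder m) = (m - 1).factorial := by
  rw [Nat.card_congr equivEmbedding, Nat.card_eq_fintype_card, Fintype.card_embedding_eq]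
  simp [Fintype.card_subtype_compl, Nat.descFactorial_self]

end CycleOrder

/-- An orbit order of the residue classes together with, for each class, the slope (a unit
mod `k`) and the offset of the affine map between consecutive classes. -/
def PAPData (m k : ℕ) [NeZero m] : Type :=
  CycleOrder m × (Fin m → {a : ℕ // a ∈ Icc 1 k ∧ a.Coprime k} × Fin k)

theorem card_coprime_Icc (k : ℕ) :
    Nat.card {a : ℕ // a ∈ Icc 1 k ∧ a.Coprime k} = k.totient := by
  rw [← Nat.filter_coprime_Ico_eq_totient k 1, ← Nat.card_eq_finsetCard]
  refine Nat.card_congr (Equiv.subtypeEquivRight fun a => ?_)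
  simp only [mem_Icc, Finset.mem_filter, Finset.mem_Ico, Nat.coprime_comm]
  omega

namespace PAPData

variable {m k : ℕ} [NeZero m]

theorem card : Nat.card (PAPData m k) = (m - 1).factorial * (k.totient * k) ^ m := by
  unfold PAPData
  rw [Nat.card_prod, CycleOrder.card, Nat.card_pi, Finset.prod_const, Finset.card_univ,
    Fintype.card_fin, Nat.card_prod, card_coprime_Icc, Nat.card_fin]

noncomputable def toPerm (p : PAPData m k) : ℕ → ℕ :=
  normalPAP (m * k) m p.1.1 (fun i => (p.2 i).1) (fun i => (p.2 i).2)

theorem toPerm_injective (hk : 0 < k) : Injective (toPerm (m := m) (k := k)) := by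
  rintro ⟨⟨c, hc, hinj, hc0⟩, p⟩ ⟨⟨c', hc', hinj', hc0'⟩, p'⟩ h
  obtain rfl := label_eq_of_normalPAP_eq hk hc hinj hc0 hc' hinj' hc0' h
  obtain ⟨ha, hv⟩ := slope_offset_eq_of_normalPAP_eq hc hinj (fun i => (p i).1.2.1)
    (fun i => (p' i).1.2.1) (fun i => (p i).2.2) (fun i => (p' i).2.2) h
  exact Prod.ext rfl <| funext fun i =>
    Prod.ext (Subtype.ext (congrFun ha i)) (Fin.ext (congrFun hv i))

theorem range_toPerm (hk : 0 < k) :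
    range (toPerm (m := m) (k := k)) = {π | ∃ a b c, IsPAP (m * k) m a b c π} := by
  refine Subset.antisymm ?_ fun π ⟨a, b, c, hP⟩ => ?_
  · rintro _ ⟨⟨⟨c, hc, hinj, -⟩, p⟩, rfl⟩
    exact ⟨_, _, _, isPAP_normalPAP hc hinj (fun i => (p i).1.2.1) (fun i => (p i).1.2.2)⟩
  obtain ⟨j, hj⟩ := hP.exists_label_eq (r := 1) ⟨le_rfl, NeZero.one_le⟩
  replace hP := hP.rotate j
  choose v hvk hv using fun i => hP.exists_apply_label_eq i hk
  refine ⟨⟨⟨_, hP.2.2.2.2.1, hP.2.2.2.2.2.1, by simpa using hj⟩,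
    fun i => (⟨psi k (a (i + j)), psi_mem hk _, ?_⟩, ⟨v i, hvk i⟩)⟩, (hP.eq_normalPAP hv).symm⟩
  rw [Nat.Coprime, (psi_modEq k _).gcd_eq]
  exact hP.coprime i

end PAPData

theorem ncard_setOf_isPAP (m k : ℕ) [NeZero m] :
    {π | ∃ a b c, IsPAP (m * k) m a b c π}.ncard = (m - 1).factorial * (k.totient * k) ^ m := by
  rcases k.eq_zero_or_pos with rfl | hk
  · rw [mul_zero]
    have : {π | ∃ a b c, IsPAP 0 m a b c π} = ∅ :=
      eq_empty_of_forall_notMem fun π ⟨a, b, c, hP⟩ => by simpa using hP.pos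
    simp [this, NeZero.ne m]
  rw [← PAPData.range_toPerm hk, ncard_range_of_injective (PAPData.toPerm_injective hk),
    PAPData.card]

theorem Nat.totient_mul_of_forall_prime_dvd {k d : ℕ} (h : ∀ p, p.Prime → p ∣ d → p ∣ k) :
    (k * d).totient = d * k.totient := by
  rcases k.eq_zero_or_pos with rfl | hk
  · simp
  rcases d.eq_zero_or_pos with rfl | hd
  · simp
  have hP : (k * d).primeFactors = k.primeFactors := by
    rw [Nat.primeFactors_mul hk.ne' hd.ne', Finset.union_eq_left]
    intro p hp
    exact Nat.mem_primeFactors.2 ⟨Nat.prime_of_mem_primeFactors hp,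
      h p (Nat.prime_of_mem_primeFactors hp) (Nat.dvd_of_mem_primeFactors hp), hk.ne'⟩
  have hpos : 0 < ∏ p ∈ k.primeFactors, p :=
    Finset.prod_pos fun p hp => Nat.pos_of_mem_primeFactors hp
  refine Nat.eq_of_mul_eq_mul_right hpos ?_
  have hk' := Nat.totient_mul_prod_primeFactors k
  rw [← hP, Nat.totient_mul_prod_primeFactors, hP, mul_assoc d, hk']
  ring

theorem mul_mul_totient_div_sq {m k n₁ n₂ : ℕ} (hm : 0 < m) (hsplit : m * k = n₁ * n₂)
    (hrad : ∀ p, p.Prime → p ∣ n₁ → p ∣ k) (hcop : n₂.Coprime k) :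
    m * k * n₂ * n₁.totient / m ^ 2 = k.totient * k := by
  rcases k.eq_zero_or_pos with rfl | hk
  · simp
  obtain ⟨d, rfl⟩ : k ∣ n₁ := hcop.symm.dvd_of_dvd_mul_right ⟨m, by rw [← hsplit, mul_comm]⟩
  have hmd : m = d * n₂ := Nat.eq_of_mul_eq_mul_left hk (by rw [mul_comm k m, hsplit]; ring)
  rw [Nat.totient_mul_of_forall_prime_dvd fun p hp hpd => hrad p hp (dvd_mul_of_dvd_right hpd k)]
  rw [show m * k * n₂ * (d * k.totient) = m ^ 2 * (k.totient * k) by rw [hmd]; ring,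
    Nat.mul_div_cancel_left _ (by positivity)]

theorem pap_number_general (n m n₁ n₂ : ℕ) [NeZero m] (hmn : m ∣ n)
    (hsplit : n = n₁ * n₂) (hrad : ∀ p : ℕ, p.Prime → p ∣ n₁ → p ∣ n / m)
    (hcop : Nat.Coprime n₂ (n / m)) :
    Set.ncard {π : ℕ → ℕ | ∃ a b c : Fin m → ℕ, IsPAP n m a b c π}
      = Nat.factorial (m - 1) * ((n * n₂ * Nat.totient n₁) / m ^ 2) ^ m := by
  obtain ⟨k, rfl⟩ := hmn
  rw [Nat.mul_div_cancel_left k (NeZero.pos m)] at hrad hcop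
  rw [ncard_setOf_isPAP, mul_mul_totient_div_sq (NeZero.pos m) hsplit hrad hcop]

/-- The number of distinct permutations of `[1,n]` arising as
`(n,m)`-piecewise affine permutations equals `(m-1)! · (n·n₂·φ(n₁)/m²)^m`. -/
theorem pap_number (n m n₁ n₂ : ℕ) [NeZero m] (hm : 1 < m) (hmn : m ∣ n)
    (hsplit : n = n₁ * n₂) (hrad : ∀ p : ℕ, p.Prime → p ∣ n₁ → p ∣ n / m)
    (hcop : Nat.Coprime n₂ (n / m)) :
    Set.ncard {π : ℕ → ℕ | ∃ a b c : Fin m → ℕ, IsPAP n m a b c π}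
      = Nat.factorial (m - 1) * ((n * n₂ * Nat.totient n₁) / m ^ 2) ^ m :=
  pap_number_general n m n₁ n₂ hmn hsplit hrad hcop
end
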